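/- arXiv:0706.3292 — 6 statements merged into one kernel-verified Lean document; each statement's English description precedes it below -/
import Mathlib

section
/- Fix q ∈ (0,1) and interlacing real numbers x₁ < y₁ < x₂ < ⋯ < x_m < y_m < x_{m+1}, and let μ_k(q), k = 1,…,m+1, be the associated weights. Then μ_k(q) > 0 for every k = 1,…,m+1, and Σ_{k=1}^{m+1} μ_k(q) = 1; that is, the weights μ_k(q) define a probability distribution on the set {x₁,…,x_{m+1}}. -/
/-!
Put `a i = q ^ x i` and `b j = q ^ y j`. Every factor of `μ_k` splits as
`((b j - a k) / b j) * (a i / (a i - a k))`, so `μ_k = f(a k) / f(0) * ℓ_k(0)`, where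
`f t = ∏ j, (t - b j)` and `ℓ_k` is the Lagrange basis polynomial of the nodes `a 1, …, a (m+1)`.
As `deg f = m < m + 1`, Lagrange interpolation at `0` gives `∑ k, f(a k) ℓ_k(0) = f(0)`, i.e.
`∑ k, μ_k = 1`. Positivity: by interlacing, numerator and denominator of each factor of `μ_k`
have the same sign.
-/

open Finset

/-- The weights `μ_k(q)` associated with interlacing sequences
`x₁ < y₁ < x₂ < ⋯ < x_m < y_m < x_{m+1}` (1-based indexing):
`μ_k(q) = Π_{i=1}^{k−1} (1−q^{x_k−y_i})/(1−q^{x_k−x_i}) ·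
Π_{i=k+1}^{m+1} (1−q^{x_k−y_{i−1}})/(1−q^{x_k−x_i})`.
Here `q ^ t` is the real power `exp (t * Real.log q)`. -/
noncomputable def muW (q : ℝ) (m : ℕ) (x y : ℕ → ℝ) (k : ℕ) : ℝ :=
  (∏ i ∈ Finset.Icc 1 (k - 1), (1 - q ^ (x k - y i)) / (1 - q ^ (x k - x i))) *
  (∏ i ∈ Finset.Icc (k + 1) (m + 1), (1 - q ^ (x k - y (i - 1))) / (1 - q ^ (x k - x i)))

open Polynomial in
lemma Lagrange.eval_zero_basis {F ι : Type*} [Field F] [DecidableEq ι] (s : Finset ι)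
    (v : ι → F) (k : ι) :
    (Lagrange.basis s v k).eval 0 = ∏ i ∈ s.erase k, v i / (v i - v k) := by
  rw [Lagrange.basis, eval_prod]
  refine prod_congr rfl fun i _ => ?_
  rw [Lagrange.basisDivisor, eval_mul, eval_C, eval_sub, eval_X, eval_C, ← neg_sub (v i),
    inv_neg, zero_sub, neg_mul_neg, div_eq_inv_mul]

open Polynomial in
theorem sum_prod_sub_div_mul_prod_div_sub_eq_one {F ι κ : Type*} [Field F] [DecidableEq ι]
    {s : Finset ι} {t : Finset κ} {a : ι → F} {b : κ → F} (ha : Set.InjOn a s)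
    (hb : ∀ j ∈ t, b j ≠ 0) (hts : #t < #s) :
    ∑ k ∈ s, (∏ j ∈ t, (b j - a k) / b j) * ∏ i ∈ s.erase k, a i / (a i - a k) = 1 := by
  set f : F[X] := ∏ j ∈ t, (X - C (b j))
  have hf : ∀ z, f.eval z = ∏ j ∈ t, (z - b j) := fun z => by simp [f, eval_prod]
  have hf0 : f.eval 0 ≠ 0 := by
    rw [hf]
    exact prod_ne_zero_iff.2 fun j hj => by simpa using hb j hj
  have hdeg : f.degree < #s :=
    degree_le_natDegree.trans_lt (by rw [natDegree_finsetProd_X_sub_C_eq_card]; exact_mod_cast hts)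
  have hinterp : f.eval 0 = ∑ k ∈ s, f.eval (a k) * ∏ i ∈ s.erase k, a i / (a i - a k) := by
    conv_lhs => rw [Lagrange.eq_interpolate ha hdeg, Lagrange.interpolate_apply]
    simp only [eval_finsetSum, eval_mul, eval_C, Lagrange.eval_zero_basis]
  have hratio : ∀ k, ∏ j ∈ t, (b j - a k) / b j = f.eval (a k) / f.eval 0 := fun k => by
    rw [hf, hf, ← prod_div_distrib]
    exact prod_congr rfl fun j _ => by rw [← neg_div_neg_eq, neg_sub, zero_sub]
  simp only [hratio, div_mul_eq_mul_div, ← sum_div, ← hinterp, div_self hf0]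

lemma one_sub_rpow_div_one_sub_rpow_pos {q u v : ℝ} (hq0 : 0 < q) (hq1 : q < 1)
    (huv : 0 < u * v) : 0 < (1 - q ^ u) / (1 - q ^ v) := by
  rcases pos_and_pos_or_neg_and_neg_of_mul_pos huv with ⟨hu, hv⟩ | ⟨hu, hv⟩
  · exact div_pos (sub_pos.2 (Real.rpow_lt_one hq0.le hq1 hu))
      (sub_pos.2 (Real.rpow_lt_one hq0.le hq1 hv))
  · exact div_pos_of_neg_of_neg (sub_neg.2 (Real.one_lt_rpow_of_pos_of_lt_one_of_neg hq0 hq1 hu))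
      (sub_neg.2 (Real.one_lt_rpow_of_pos_of_lt_one_of_neg hq0 hq1 hv))

lemma one_sub_rpow_sub_div_one_sub_rpow_sub {q : ℝ} (hq : 0 < q) {u v w : ℝ}
    (hwu : q ^ w ≠ q ^ u) :
    (1 - q ^ (u - v)) / (1 - q ^ (u - w)) =
      (q ^ v - q ^ u) / q ^ v * (q ^ w / (q ^ w - q ^ u)) := by
  have hv := (Real.rpow_pos_of_pos hq v).ne'
  have hw := (Real.rpow_pos_of_pos hq w).ne'
  have hwu' := sub_ne_zero_of_ne hwu
  rw [Real.rpow_sub hq, Real.rpow_sub hq]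
  field_simp

lemma prod_Icc_mul_prod_Icc_eq_prod_erase {M : Type*} [CommMonoid M] (f : ℕ → M) {k m : ℕ}
    (hk : 1 ≤ k) (hkm : k ≤ m + 1) :
    (∏ i ∈ Icc 1 (k - 1), f i) * ∏ i ∈ Icc (k + 1) (m + 1), f i =
      ∏ i ∈ (Icc 1 (m + 1)).erase k, f i := by
  rw [← prod_union (disjoint_left.2 fun i => by simp only [mem_Icc]; omega)]
  congr 1
  ext i
  simp only [mem_union, mem_Icc, mem_erase]
  omega

lemma prod_Icc_mul_prod_Icc_sub_one {M : Type*} [CommMonoid M] (f : ℕ → M) {k m : ℕ}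
    (hk : 1 ≤ k) (hkm : k ≤ m + 1) :
    (∏ i ∈ Icc 1 (k - 1), f i) * ∏ i ∈ Icc (k + 1) (m + 1), f (i - 1) = ∏ i ∈ Icc 1 m, f i := by
  have hshift : ∏ i ∈ Icc (k + 1) (m + 1), f (i - 1) = ∏ i ∈ Icc k m, f i := by
    rw [← map_add_right_Icc, prod_map]
    rfl
  have hsplit : Icc 1 m = Icc 1 (k - 1) ∪ Icc k m := by
    ext i
    simp only [mem_union, mem_Icc]
    omega
  rw [hshift, hsplit, prod_union (disjoint_left.2 fun i => by simp only [mem_Icc]; omega)]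

section Interlacing

variable {q : ℝ} {m : ℕ} {x y : ℕ → ℝ}

lemma strictMonoOn_of_interlacing (hxy : ∀ i, 1 ≤ i → i ≤ m → x i < y i)
    (hyx : ∀ i, 1 ≤ i → i ≤ m → y i < x (i + 1)) : StrictMonoOn x (Set.Icc 1 (m + 1)) :=
  strictMonoOn_of_lt_add_one Set.ordConnected_Icc fun i _ hi hi' =>
    (hxy i hi.1 (by simp at hi'; omega)).trans (hyx i hi.1 (by simp at hi'; omega))

lemma muW_pos (hq0 : 0 < q) (hq1 : q < 1) (hxy : ∀ i, 1 ≤ i → i ≤ m → x i < y i)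
    (hyx : ∀ i, 1 ≤ i → i ≤ m → y i < x (i + 1)) {k : ℕ} (hk : 1 ≤ k) (hkm : k ≤ m + 1) :
    0 < muW q m x y k := by
  have hmono := strictMonoOn_of_interlacing hxy hyx
  refine mul_pos (prod_pos fun i hi => ?_) (prod_pos fun i hi => ?_) <;> rw [mem_Icc] at hi <;>
    refine one_sub_rpow_div_one_sub_rpow_pos hq0 hq1 ?_
  · have hyi : y i < x k := (hyx i hi.1 (by omega)).trans_le
      (hmono.monotoneOn ⟨by omega, by omega⟩ ⟨hk, hkm⟩ (by omega))
    exact mul_pos (sub_pos.2 hyi) (sub_pos.2 (hmono ⟨hi.1, by omega⟩ ⟨hk, hkm⟩ (by omega)))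
  · have hyi : x k < y (i - 1) := (hmono.monotoneOn ⟨hk, hkm⟩ ⟨by omega, by omega⟩
      (by omega)).trans_lt (hxy (i - 1) (by omega) (by omega))
    exact mul_pos_of_neg_of_neg (sub_neg.2 hyi)
      (sub_neg.2 (hmono ⟨hk, hkm⟩ ⟨by omega, hi.2⟩ (by omega)))

lemma muW_eq_prod (hq : 0 < q) (hinj : Set.InjOn (fun i => q ^ x i) (Icc 1 (m + 1)))
    {k : ℕ} (hk : 1 ≤ k) (hkm : k ≤ m + 1) :
    muW q m x y k = (∏ j ∈ Icc 1 m, (q ^ y j - q ^ x k) / q ^ y j) *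
      ∏ i ∈ (Icc 1 (m + 1)).erase k, q ^ x i / (q ^ x i - q ^ x k) := by
  have hne : ∀ i ∈ Icc 1 (m + 1), i ≠ k → q ^ x i ≠ q ^ x k := fun i hi hik =>
    hinj.ne (mem_coe.2 hi) (mem_coe.2 (mem_Icc.2 ⟨hk, hkm⟩)) hik
  rw [muW, ← prod_Icc_mul_prod_Icc_sub_one _ hk hkm, ← prod_Icc_mul_prod_Icc_eq_prod_erase _ hk hkm,
    prod_congr rfl fun i hi => one_sub_rpow_sub_div_one_sub_rpow_sub hq
      (hne i (by simp at hi ⊢; omega) (by simp at hi; omega)),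
    prod_congr rfl fun i hi => one_sub_rpow_sub_div_one_sub_rpow_sub hq
      (hne i (by simp at hi ⊢; omega) (by simp at hi; omega)),
    prod_mul_distrib, prod_mul_distrib]
  ring

end Interlacing

/-- For `q ∈ (0,1)` and interlacing reals `x₁ < y₁ < ⋯ < y_m < x_{m+1}`, the weights
`μ_k(q)` are strictly positive and sum to `1`: they define a probability distribution on
`{x₁, …, x_{m+1}}`. -/
theorem stmt4 (q : ℝ) (hq : q ∈ Set.Ioo (0 : ℝ) 1) (m : ℕ) (x y : ℕ → ℝ)
    (hxy : ∀ i, 1 ≤ i → i ≤ m → x i < y i)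
    (hyx : ∀ i, 1 ≤ i → i ≤ m → y i < x (i + 1)) :
    (∀ k, 1 ≤ k → k ≤ m + 1 → 0 < muW q m x y k) ∧
    (∑ k ∈ Finset.Icc 1 (m + 1), muW q m x y k) = 1 := by
  obtain ⟨hq0, hq1⟩ := hq
  refine ⟨fun k hk hkm => muW_pos hq0 hq1 hxy hyx hk hkm, ?_⟩
  have hinj : Set.InjOn (fun i => q ^ x i) (Icc 1 (m + 1)) := by
    rw [coe_Icc]
    exact ((Real.strictAnti_rpow_of_base_lt_one hq0 hq1).comp_strictMonoOn
      (strictMonoOn_of_interlacing hxy hyx)).injOn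
  rw [sum_congr rfl fun k hk => muW_eq_prod hq0 hinj (mem_Icc.1 hk).1 (mem_Icc.1 hk).2]
  exact sum_prod_sub_div_mul_prod_div_sub_eq_one hinj
    (fun j _ => (Real.rpow_pos_of_pos hq0 _).ne') (by simp)
end

section
/- Let a < b be reals, q ∈ (0,1), μ a Borel probability measure on ℝ supported in [a,b], and f : ℝ → ℝ Lebesgue integrable, vanishing outside [a,b], with ∫ f(s) ds = 0. Set h_n = ∫ q^{−ns} dμ(s) and p_n = 1 − n·ln(q^{−1})·∫ q^{−ns} f(s) ds for n ≥ 1. Then the identity ∫ (1 − q^{x−s})^{−1} dμ(s) = (1 − q^x)^{−1} · exp( −ln(q^{−1}) · ∫ f(s)(1 − q^{x−s})^{−1} ds ) holds for all x > b if and only if the identity 1 + Σ_{n=1}^∞ h_n q^{nx} = exp( Σ_{n=1}^∞ p_n q^{nx}/n ) holds for all x > b. -/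
/-!
For `x > b` and `s ≤ b` we have `0 < q^{x-s} < 1`, so `(1 - q^{x-s})⁻¹ = Σ_{n ≥ 0} q^{nx} q^{-ns}`
with a geometric majorant, and integrating termwise gives
`∫ (1 - q^{x-s})⁻¹ dμ = 1 + Σ h_n q^{nx}` and (using `∫ f = 0`) `∫ f(s) (1 - q^{x-s})⁻¹ ds =
Σ c_n q^{nx}` with `c_n = ∫ q^{-ns} f`. Since `p_n q^{nx} / n = q^{nx} / n - ln(q⁻¹) c_n q^{nx}`,
for `x > 0` the exponent on the right is `-log (1 - q^x) - ln(q⁻¹) ∫ f(s) (1 - q^{x-s})⁻¹ ds`, and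
the two identities coincide pointwise. If `b < 0`, both fail at `x = b/2 < 0`: there
`∫ (1 - q^{x-s})⁻¹ dμ > 1` while `(1 - q^x)⁻¹ < 0`, and the `p`-series diverges like `Σ 1/n`,
so its `tsum` is the junk value `0`.
-/

open MeasureTheory

section Geometric

variable {α : Type*} [MeasurableSpace α] {ν : Measure α}

theorem hasSum_integral_mul_pow {g r : α → ℝ} {c : ℝ} (hg : Integrable g ν)
    (hr : AEStronglyMeasurable r ν) (hc0 : 0 ≤ c) (hc1 : c < 1)
    (hrc : ∀ᵐ s ∂ν, g s ≠ 0 → ‖r s‖ ≤ c) :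
    HasSum (fun n : ℕ => ∫ s, g s * r s ^ n ∂ν) (∫ s, g s * (1 - r s)⁻¹ ∂ν) := by
  have hbound : ∀ n : ℕ, ∀ᵐ s ∂ν, ‖g s * r s ^ n‖ ≤ c ^ n * ‖g s‖ := fun n => by
    filter_upwards [hrc] with s hs
    rcases eq_or_ne (g s) 0 with h0 | h0
    · simp [h0]
    · rw [norm_mul, norm_pow, mul_comm]
      gcongr
      exact hs h0
  have hint : ∀ n : ℕ, Integrable (fun s => g s * r s ^ n) ν := fun n =>
    (hg.norm.const_mul _).mono' (hg.1.mul (hr.pow n)) (hbound n)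
  have hsum : Summable fun n : ℕ => ∫ s, ‖g s * r s ^ n‖ ∂ν := by
    refine .of_nonneg_of_le (fun n => integral_nonneg fun s => norm_nonneg _) (fun n => ?_)
      ((summable_geometric_of_lt_one hc0 hc1).mul_right (∫ s, ‖g s‖ ∂ν))
    rw [← integral_const_mul]
    exact integral_mono_ae (hint n).norm (hg.norm.const_mul _) (hbound n)
  have htsum : ∀ᵐ s ∂ν, ∑' n : ℕ, g s * r s ^ n = g s * (1 - r s)⁻¹ := by
    filter_upwards [hrc] with s hs
    rcases eq_or_ne (g s) 0 with h0 | h0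
    · simp [h0]
    · rw [tsum_mul_left, tsum_geometric_of_norm_lt_one ((hs h0).trans_lt hc1)]
  simpa only [integral_congr_ae htsum] using hasSum_integral_of_summable_integral_norm hint hsum

theorem integral_pos_of_ae_pos [NeZero ν] {f : α → ℝ} (hfi : Integrable f ν)
    (hf : ∀ᵐ x ∂ν, 0 < f x) : 0 < ∫ x, f x ∂ν := by
  have := ae_neBot.2 (NeZero.ne ν)
  refine (integral_pos_iff_support_of_nonneg_ae (hf.mono fun _ => le_of_lt) hfi).2
    (pos_iff_ne_zero.2 fun h0 => ?_)
  obtain ⟨x, hpos, hx⟩ := (hf.and (measure_eq_zero_iff_ae_notMem.1 h0)).exists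
  exact hx hpos.ne'

end Geometric

theorem not_summable_pow_succ_div {y : ℝ} (hy : 1 ≤ y) :
    ¬Summable fun n : ℕ => y ^ (n + 1) / ((n : ℝ) + 1) := by
  intro hs
  refine Real.not_summable_one_div_natCast ((summable_nat_add_iff 1).1 ?_)
  refine .of_nonneg_of_le (fun n => by positivity) (fun n => ?_) hs
  push_cast
  gcongr
  exact one_le_pow₀ hy

section QSeries

variable {b q x : ℝ}

theorem rpow_sub_pow_eq (hq : 0 < q) (x s : ℝ) (m : ℕ) :
    (q ^ (x - s)) ^ m = q ^ (-(m : ℝ) * s) * q ^ ((m : ℝ) * x) := by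
  rw [← Real.rpow_natCast, ← Real.rpow_mul hq.le, ← Real.rpow_add hq]
  ring_nf

theorem hasSum_integral_mul_rpow {ν : Measure ℝ} {g : ℝ → ℝ}
    (hq0 : 0 < q) (hq1 : q < 1) (hg : Integrable g ν) (hgb : ∀ᵐ s ∂ν, g s ≠ 0 → s ≤ b)
    (hx : b < x) :
    HasSum (fun m : ℕ => (∫ s, q ^ (-(m : ℝ) * s) * g s ∂ν) * q ^ ((m : ℝ) * x))
      (∫ s, g s * (1 - q ^ (x - s))⁻¹ ∂ν) := by
  have hr : AEStronglyMeasurable (fun s => q ^ (x - s)) ν :=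
    Measurable.aestronglyMeasurable (by fun_prop)
  have hrc : ∀ᵐ s ∂ν, g s ≠ 0 → ‖q ^ (x - s)‖ ≤ q ^ (x - b) := by
    filter_upwards [hgb] with s hs hgs
    rw [Real.norm_of_nonneg (Real.rpow_nonneg hq0.le _)]
    exact Real.rpow_le_rpow_of_exponent_ge hq0 hq1.le (by linarith [hs hgs])
  convert hasSum_integral_mul_pow hg hr (Real.rpow_nonneg hq0.le _)
    (Real.rpow_lt_one hq0.le hq1 (sub_pos.2 hx)) hrc using 2 with m
  simp only [rpow_sub_pow_eq hq0, ← integral_mul_const]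
  congr 1 with s
  ring

end QSeries

section MarkovKrein

variable {b q x : ℝ} {μ : Measure ℝ} [IsProbabilityMeasure μ] {f : ℝ → ℝ} {h p : ℕ → ℝ}

theorem hasSum_h_series (hq0 : 0 < q) (hq1 : q < 1) (hμ : ∀ᵐ s ∂μ, s ≤ b)
    (hh : ∀ n : ℕ, 1 ≤ n → h n = ∫ s, q ^ (-(n : ℝ) * s) ∂μ) (hx : b < x) :
    HasSum (fun n : ℕ => h (n + 1) * q ^ (((n : ℝ) + 1) * x))
      ((∫ s, (1 - q ^ (x - s))⁻¹ ∂μ) - 1) := by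
  have H := (hasSum_nat_add_iff' 1).2 <| hasSum_integral_mul_rpow (g := fun _ => 1) hq0 hq1
    (integrable_const 1) (hμ.mono fun _ hs _ => hs) hx
  simp only [mul_one, one_mul, Finset.sum_range_one, CharP.cast_eq_zero, neg_zero, zero_mul,
    Real.rpow_zero, integral_const, probReal_univ, smul_eq_mul, Nat.cast_add, Nat.cast_one] at H
  have hterm (n : ℕ) : h (n + 1) = ∫ s, q ^ (-((n : ℝ) + 1) * s) ∂μ := by
    rw [hh (n + 1) n.succ_pos]
    push_cast
    rfl
  simpa only [hterm] using H

theorem hasSum_charge_series (hq0 : 0 < q) (hq1 : q < 1) (hf : Integrable f)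
    (hfb : ∀ s, f s ≠ 0 → s ≤ b) (hzero : ∫ s, f s = 0) (hx : b < x) :
    HasSum (fun n : ℕ => (∫ s, q ^ (-((n : ℝ) + 1) * s) * f s) * q ^ (((n : ℝ) + 1) * x))
      (∫ s, f s * (1 - q ^ (x - s))⁻¹) := by
  have H := (hasSum_nat_add_iff' 1).2 <|
    hasSum_integral_mul_rpow hq0 hq1 hf (ae_of_all _ hfb) hx
  simpa only [Finset.sum_range_one, CharP.cast_eq_zero, neg_zero, zero_mul, Real.rpow_zero,
    one_mul, mul_one, hzero, sub_zero, Nat.cast_add, Nat.cast_one] using H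

theorem p_term_eq (hp : ∀ n : ℕ, 1 ≤ n →
      p n = 1 - (n : ℝ) * Real.log q⁻¹ * ∫ s, q ^ (-(n : ℝ) * s) * f s) (hq0 : 0 < q) (n : ℕ) :
    p (n + 1) * q ^ (((n : ℝ) + 1) * x) / ((n : ℝ) + 1)
      = (q ^ x) ^ (n + 1) / ((n : ℝ) + 1) - Real.log q⁻¹ *
        ((∫ s, q ^ (-((n : ℝ) + 1) * s) * f s) * q ^ (((n : ℝ) + 1) * x)) := by
  rw [hp (n + 1) n.succ_pos, ← Real.rpow_natCast, ← Real.rpow_mul hq0.le]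
  push_cast
  field_simp

theorem hasSum_p_series (hq0 : 0 < q) (hq1 : q < 1) (hf : Integrable f)
    (hfb : ∀ s, f s ≠ 0 → s ≤ b) (hzero : ∫ s, f s = 0)
    (hp : ∀ n : ℕ, 1 ≤ n → p n = 1 - (n : ℝ) * Real.log q⁻¹ * ∫ s, q ^ (-(n : ℝ) * s) * f s)
    (hx : b < x) (hx0 : 0 < x) :
    HasSum (fun n : ℕ => p (n + 1) * q ^ (((n : ℝ) + 1) * x) / ((n : ℝ) + 1))
      (-Real.log (1 - q ^ x) - Real.log q⁻¹ * ∫ s, f s * (1 - q ^ (x - s))⁻¹) := by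
  have hqx : |q ^ x| < 1 := by
    rw [abs_of_pos (Real.rpow_pos_of_pos hq0 x)]
    exact Real.rpow_lt_one hq0.le hq1 hx0
  simpa only [p_term_eq hp hq0] using (Real.hasSum_pow_div_log_of_abs_lt_one hqx).sub
    ((hasSum_charge_series hq0 hq1 hf hfb hzero hx).mul_left (Real.log q⁻¹))

theorem not_summable_p_series (hq0 : 0 < q) (hq1 : q < 1) (hf : Integrable f)
    (hfb : ∀ s, f s ≠ 0 → s ≤ b) (hzero : ∫ s, f s = 0)
    (hp : ∀ n : ℕ, 1 ≤ n → p n = 1 - (n : ℝ) * Real.log q⁻¹ * ∫ s, q ^ (-(n : ℝ) * s) * f s)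
    (hx : b < x) (hx0 : x ≤ 0) :
    ¬Summable fun n : ℕ => p (n + 1) * q ^ (((n : ℝ) + 1) * x) / ((n : ℝ) + 1) := by
  intro hs
  refine not_summable_pow_succ_div (Real.one_le_rpow_of_pos_of_le_one_of_nonpos hq0 hq1.le hx0) ?_
  convert hs.add ((hasSum_charge_series hq0 hq1 hf hfb hzero hx).summable.mul_left
    (Real.log q⁻¹)) using 2 with n
  rw [p_term_eq hp hq0]
  ring

theorem one_lt_integral_inv_one_sub_rpow (hq0 : 0 < q) (hq1 : q < 1) (hμ : ∀ᵐ s ∂μ, s ≤ b)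
    (hx : b < x) : 1 < ∫ s, (1 - q ^ (x - s))⁻¹ ∂μ := by
  have hr : ∀ᵐ s ∂μ, 0 < q ^ (x - s) ∧ q ^ (x - s) < 1 ∧ q ^ (x - s) ≤ q ^ (x - b) := by
    filter_upwards [hμ] with s hs
    exact ⟨Real.rpow_pos_of_pos hq0 _, Real.rpow_lt_one hq0.le hq1 (by linarith),
      Real.rpow_le_rpow_of_exponent_ge hq0 hq1.le (by linarith)⟩
  have hc : q ^ (x - b) < 1 := Real.rpow_lt_one hq0.le hq1 (sub_pos.2 hx)
  have hint : Integrable (fun s => (1 - q ^ (x - s))⁻¹) μ := by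
    refine .of_bound (Measurable.aestronglyMeasurable (by fun_prop)) (1 - q ^ (x - b))⁻¹ ?_
    filter_upwards [hr] with s ⟨_, hs1, hsc⟩
    rw [Real.norm_of_nonneg (inv_nonneg.2 (by linarith))]
    exact inv_anti₀ (by linarith) (by linarith)
  have hpos := integral_pos_of_ae_pos (f := fun s => (1 - q ^ (x - s))⁻¹ - 1)
    (hint.sub (integrable_const 1)) <| hr.mono fun s ⟨hs0, hs1, _⟩ =>
      sub_pos.2 <| (one_lt_inv₀ (by linarith)).2 (by linarith)
  rw [integral_sub hint (integrable_const 1), integral_const, probReal_univ, one_smul] at hpos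
  linarith

end MarkovKrein

theorem stmt8_general (a b : ℝ) (q : ℝ) (hq : q ∈ Set.Ioo (0 : ℝ) 1)
    (μ : Measure ℝ) [IsProbabilityMeasure μ] (hsupp : μ (Set.Icc a b)ᶜ = 0)
    (f : ℝ → ℝ) (hf : Integrable f) (hvanish : ∀ s : ℝ, s ∉ Set.Icc a b → f s = 0)
    (hzero : (∫ s, f s) = 0)
    (h p : ℕ → ℝ)
    (hh : ∀ n : ℕ, 1 ≤ n → h n = ∫ s, q ^ (-(n : ℝ) * s) ∂μ)
    (hp : ∀ n : ℕ, 1 ≤ n → p n = 1 - (n : ℝ) * Real.log q⁻¹ * ∫ s, q ^ (-(n : ℝ) * s) * f s) :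
    (∀ x : ℝ, b < x →
        (∫ s, (1 - q ^ (x - s))⁻¹ ∂μ)
          = (1 - q ^ x)⁻¹ *
              Real.exp (-Real.log q⁻¹ * ∫ s, f s * (1 - q ^ (x - s))⁻¹)) ↔
    (∀ x : ℝ, b < x →
        1 + (∑' n : ℕ, h (n + 1) * q ^ (((n : ℝ) + 1) * x))
          = Real.exp (∑' n : ℕ, p (n + 1) * q ^ (((n : ℝ) + 1) * x) / ((n : ℝ) + 1))) := by
  obtain ⟨hq0, hq1⟩ := hq
  have hμ : ∀ᵐ s ∂μ, s ≤ b := (measure_eq_zero_iff_ae_notMem.1 hsupp).mono fun s hs =>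
    (not_not.1 hs).2
  have hfb (s : ℝ) (hs : f s ≠ 0) : s ≤ b := (not_not.1 (mt (hvanish s) hs)).2
  rcases le_or_gt 0 b with hb | hb
  · refine forall₂_congr fun x hx => ?_
    have hqx : q ^ x < 1 := Real.rpow_lt_one hq0.le hq1 (hb.trans_lt hx)
    rw [(hasSum_h_series hq0 hq1 hμ hh hx).tsum_eq,
      (hasSum_p_series hq0 hq1 hf hfb hzero hp hx (hb.trans_lt hx)).tsum_eq, add_sub_cancel,
      Real.exp_sub, Real.exp_neg, Real.exp_log (sub_pos.2 hqx), div_eq_inv_mul, ← Real.exp_neg,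
      neg_mul, mul_comm]
  · have hx : b < b / 2 := by linarith
    have hx0 : b / 2 < 0 := by linarith
    have hgt := one_lt_integral_inv_one_sub_rpow hq0 hq1 hμ hx
    refine iff_of_false (fun H => ?_) (fun H => ?_)
    · have hinv : (1 - q ^ (b / 2))⁻¹ < 0 :=
        inv_lt_zero.2 (sub_neg.2 (Real.one_lt_rpow_of_pos_of_lt_one_of_neg hq0 hq1 hx0))
      have := mul_neg_of_neg_of_pos hinv (Real.exp_pos (-Real.log q⁻¹ *
        ∫ s, f s * (1 - q ^ (b / 2 - s))⁻¹))
      linarith [H _ hx]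
    · have := H _ hx
      rw [tsum_eq_zero_of_not_summable (not_summable_p_series hq0 hq1 hf hfb hzero hp hx hx0.le),
        Real.exp_zero, (hasSum_h_series hq0 hq1 hμ hh hx).tsum_eq] at this
      linarith

/-- Let `a < b`, `q ∈ (0,1)`, `μ` a Borel probability measure supported in `[a,b]`, and
`f : ℝ → ℝ` Lebesgue integrable, vanishing outside `[a,b]`, with `∫ f = 0`. Put
`h_n = ∫ q^{−ns} dμ(s)` and `p_n = 1 − n·ln(q⁻¹)·∫ q^{−ns} f(s) ds` for `n ≥ 1`. Then the
q-deformed Markov–Krein identity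
`∫ (1 − q^{x−s})⁻¹ dμ(s) = (1 − q^x)⁻¹ · exp(−ln(q⁻¹)·∫ f(s)(1 − q^{x−s})⁻¹ ds)`
holds for all `x > b` iff the identity
`1 + Σ_{n≥1} h_n q^{nx} = exp(Σ_{n≥1} p_n q^{nx}/n)` holds for all `x > b`. -/
theorem stmt8 (a b : ℝ) (hab : a < b) (q : ℝ) (hq : q ∈ Set.Ioo (0 : ℝ) 1)
    (μ : Measure ℝ) [IsProbabilityMeasure μ] (hsupp : μ (Set.Icc a b)ᶜ = 0)
    (f : ℝ → ℝ) (hf : Integrable f) (hvanish : ∀ s : ℝ, s ∉ Set.Icc a b → f s = 0)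
    (hzero : (∫ s, f s) = 0)
    (h p : ℕ → ℝ)
    (hh : ∀ n : ℕ, 1 ≤ n → h n = ∫ s, q ^ (-(n : ℝ) * s) ∂μ)
    (hp : ∀ n : ℕ, 1 ≤ n → p n = 1 - (n : ℝ) * Real.log q⁻¹ * ∫ s, q ^ (-(n : ℝ) * s) * f s) :
    (∀ x : ℝ, b < x →
        (∫ s, (1 - q ^ (x - s))⁻¹ ∂μ)
          = (1 - q ^ x)⁻¹ *
              Real.exp (-Real.log q⁻¹ * ∫ s, f s * (1 - q ^ (x - s))⁻¹)) ↔
    (∀ x : ℝ, b < x →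
        1 + (∑' n : ℕ, h (n + 1) * q ^ (((n : ℝ) + 1) * x))
          = Real.exp (∑' n : ℕ, p (n + 1) * q ^ (((n : ℝ) + 1) * x) / ((n : ℝ) + 1))) :=
  stmt8_general a b q hq μ hsupp f hf hvanish hzero h p hh hp
end

section
/- Let a < b be reals and q ∈ (0,1). If μ and ν are Borel probability measures on ℝ supported in [a,b] such that ∫ (1 − q^{x−s})^{−1} dμ(s) = ∫ (1 − q^{x−s})^{−1} dν(s) for every real x > b, then μ = ν. That is, the q-deformed R-function R_μ(x;q) = (1−q)·∫ (1 − q^{x−s})^{−1} dμ(s), considered for x > b, determines the measure μ uniquely. -/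
/-!
Substituting `t = q ^ x` turns the integrand into `(1 - t * q ^ (-s))⁻¹ = ∑ tⁿ (q ^ (-s))ⁿ`, so
for `|t| < q ^ b` the transform is a power series in `t` whose coefficients are the moments of
the image of `μ` under `s ↦ q ^ (-s)`, a measure supported in a compact interval. Equality for
`x > b` is equality for `t ∈ (0, q ^ b)`, which by the identity theorem forces equality of all
coefficients. By Weierstrass approximation, moments determine a compactly supported measure, and
`s ↦ q ^ (-s)` is injective.
-/

open MeasureTheory Set Filter Topology Polynomial

lemma MeasureTheory.integrable_of_ae_mem_of_isCompact {X : Type*} [TopologicalSpace X]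
    [T2Space X] [MeasurableSpace X] [OpensMeasurableSpace X] {μ : Measure X} [IsFiniteMeasure μ]
    {K : Set X} (hK : IsCompact K) (hμ : ∀ᵐ x ∂μ, x ∈ K) {g : X → ℝ} (hg : ContinuousOn g K) :
    Integrable g μ := by
  rw [← Measure.restrict_eq_self_of_ae_mem hμ]
  exact hg.integrableOn_compact hK

section Moments

variable {μ ν : Measure ℝ} [IsFiniteMeasure μ] [IsFiniteMeasure ν] {A B : ℝ}

lemma integral_eval_eq_of_forall_integral_pow_eq (hμ : ∀ᵐ x ∂μ, x ∈ Icc A B)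
    (hν : ∀ᵐ x ∂ν, x ∈ Icc A B) (h : ∀ n : ℕ, ∫ x, x ^ n ∂μ = ∫ x, x ^ n ∂ν) (P : ℝ[X]) :
    ∫ x, P.eval x ∂μ = ∫ x, P.eval x ∂ν := by
  have hint : ∀ {ρ : Measure ℝ} [IsFiniteMeasure ρ], (∀ᵐ x ∂ρ, x ∈ Icc A B) → ∀ i,
      Integrable (fun x => P.coeff i * x ^ i) ρ := fun hρ _ =>
    integrable_of_ae_mem_of_isCompact isCompact_Icc hρ (by fun_prop)
  simp_rw [eval_eq_sum_range]
  rw [integral_finsetSum _ fun i _ => hint hμ i, integral_finsetSum _ fun i _ => hint hν i]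
  simp_rw [integral_const_mul, h]

lemma integral_eq_of_forall_integral_pow_eq (hμ : ∀ᵐ x ∂μ, x ∈ Icc A B)
    (hν : ∀ᵐ x ∂ν, x ∈ Icc A B) (h : ∀ n : ℕ, ∫ x, x ^ n ∂μ = ∫ x, x ^ n ∂ν) {g : ℝ → ℝ}
    (hg : ContinuousOn g (Icc A B)) :
    ∫ x, g x ∂μ = ∫ x, g x ∂ν := by
  have hclose : ∀ {ρ : Measure ℝ} [IsFiniteMeasure ρ], (∀ᵐ x ∂ρ, x ∈ Icc A B) →
      ∀ {δ : ℝ} (P : ℝ[X]), (∀ x ∈ Icc A B, |P.eval x - g x| < δ) →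
      |∫ x, P.eval x ∂ρ - ∫ x, g x ∂ρ| ≤ δ * ρ.real univ := fun hρ δ P hP => by
    rw [← integral_sub (integrable_of_ae_mem_of_isCompact isCompact_Icc hρ
      P.continuous.continuousOn) (integrable_of_ae_mem_of_isCompact isCompact_Icc hρ hg)]
    exact norm_integral_le_of_norm_le_const (f := fun x => P.eval x - g x)
      (hρ.mono fun x hx => (hP x hx).le)
  refine eq_of_forall_dist_le fun ε hε => ?_
  set C := μ.real univ + ν.real univ + 1
  have hC : 0 < C := by positivity
  obtain ⟨P, hP⟩ := exists_polynomial_near_of_continuousOn A B g hg (ε / C) (by positivity)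
  have hPμ := hclose hμ P hP
  have hPν := hclose hν P hP
  rw [integral_eval_eq_of_forall_integral_pow_eq hμ hν h P] at hPμ
  calc dist (∫ x, g x ∂μ) (∫ x, g x ∂ν)
      = |(∫ x, P.eval x ∂ν - ∫ x, g x ∂ν) - (∫ x, P.eval x ∂ν - ∫ x, g x ∂μ)| := by
        rw [Real.dist_eq]; ring_nf
    _ ≤ ε / C * ν.real univ + ε / C * μ.real univ := (abs_sub _ _).trans (add_le_add hPν hPμ)
    _ ≤ ε / C * C := by rw [← mul_add]; gcongr; linarith
    _ = ε := div_mul_cancel₀ ε hC.ne'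

lemma MeasureTheory.Measure.ext_of_forall_integral_pow_eq (hμ : ∀ᵐ x ∂μ, x ∈ Icc A B)
    (hν : ∀ᵐ x ∂ν, x ∈ Icc A B) (h : ∀ n : ℕ, ∫ x, x ^ n ∂μ = ∫ x, x ^ n ∂ν) : μ = ν :=
  ext_of_forall_integral_eq_of_IsFiniteMeasure fun f =>
    integral_eq_of_forall_integral_pow_eq hμ hν h f.continuous.continuousOn

end Moments

section ResolventSeries

variable {α : Type*} [MeasurableSpace α] {μ ν : Measure α} [IsFiniteMeasure μ]
  [IsFiniteMeasure ν] {u : α → ℝ} {M : ℝ}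

lemma hasSum_integral_inv_one_sub_mul (hu : AEStronglyMeasurable u μ)
    (hM : ∀ᵐ s ∂μ, |u s| ≤ M) (hM0 : 0 ≤ M) {t : ℝ} (ht : |t| * M < 1) :
    HasSum (fun n : ℕ => t ^ n * ∫ s, u s ^ n ∂μ) (∫ s, (1 - t * u s)⁻¹ ∂μ) := by
  have hbound : ∀ n : ℕ, ∀ᵐ s ∂μ, ‖(t * u s) ^ n‖ ≤ (|t| * M) ^ n := fun n =>
    hM.mono fun s hs => by
      rw [norm_pow, Real.norm_eq_abs, abs_mul]
      gcongr
  have hint : ∀ n : ℕ, Integrable (fun s => (t * u s) ^ n) μ := fun n =>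
    .of_bound ((aestronglyMeasurable_const.mul hu).pow n) _ (hbound n)
  have hsummable : Summable fun n : ℕ => ∫ s, ‖(t * u s) ^ n‖ ∂μ := by
    refine .of_nonneg_of_le (fun n => integral_nonneg fun s => norm_nonneg _) (fun n => ?_)
      ((summable_geometric_of_lt_one (by positivity) ht).mul_left (μ.real univ))
    simpa [mul_comm] using integral_mono_ae (hint n).norm (integrable_const _) (hbound n)
  have hgeom : ∀ᵐ s ∂μ, ∑' n : ℕ, (t * u s) ^ n = (1 - t * u s)⁻¹ := hM.mono fun s hs =>
    tsum_geometric_of_norm_lt_one <| by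
      rw [Real.norm_eq_abs, abs_mul]
      exact (mul_le_mul_of_nonneg_left hs (abs_nonneg t)).trans_lt ht
  rw [← integral_congr_ae hgeom]
  refine (hasSum_integral_of_summable_integral_norm hint hsummable).congr_fun fun n => ?_
  simp_rw [mul_pow, integral_const_mul]

lemma hasFPowerSeriesOnBall_integral_inv_one_sub_mul (hu : AEStronglyMeasurable u μ)
    (hM : ∀ᵐ s ∂μ, |u s| ≤ M) (hM0 : 0 < M) :
    HasFPowerSeriesOnBall (fun t => ∫ s, (1 - t * u s)⁻¹ ∂μ)
      (FormalMultilinearSeries.ofScalars ℝ fun n => ∫ s, u s ^ n ∂μ) 0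
      (ENNReal.ofReal M⁻¹) where
  r_le := by
    rw [ENNReal.ofReal]
    refine FormalMultilinearSeries.le_radius_of_bound _ (μ.real univ) fun n => ?_
    have hmoment : ‖∫ s, u s ^ n ∂μ‖ ≤ M ^ n * μ.real univ :=
      norm_integral_le_of_norm_le_const <| hM.mono fun s hs => by
        rw [norm_pow, Real.norm_eq_abs]
        gcongr
    rw [FormalMultilinearSeries.ofScalars_norm, Real.coe_toNNReal _ (by positivity), inv_pow]
    calc ‖∫ s, u s ^ n ∂μ‖ * (M ^ n)⁻¹ ≤ M ^ n * μ.real univ * (M ^ n)⁻¹ := by gcongr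
      _ = μ.real univ := by field_simp
  r_pos := by simpa using hM0
  hasSum {t} ht := by
    rw [Metric.mem_eball, edist_zero_right, ← ofReal_norm, ENNReal.ofReal_lt_ofReal_iff'] at ht
    simpa [FormalMultilinearSeries.ofScalars_apply_eq] using
      hasSum_integral_inv_one_sub_mul hu hM hM0.le (t := t) (by
        calc |t| * M < M⁻¹ * M := by gcongr; exact ht.1
          _ = 1 := inv_mul_cancel₀ hM0.ne')

lemma integral_pow_eq_of_frequently_integral_inv_one_sub_mul_eq
    (huμ : AEStronglyMeasurable u μ) (huν : AEStronglyMeasurable u ν)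
    (hMμ : ∀ᵐ s ∂μ, |u s| ≤ M) (hMν : ∀ᵐ s ∂ν, |u s| ≤ M) (hM0 : 0 < M)
    (h : ∃ᶠ t in 𝓝[≠] 0, ∫ s, (1 - t * u s)⁻¹ ∂μ = ∫ s, (1 - t * u s)⁻¹ ∂ν) (n : ℕ) :
    ∫ s, u s ^ n ∂μ = ∫ s, u s ^ n ∂ν := by
  have hFμ := hasFPowerSeriesOnBall_integral_inv_one_sub_mul huμ hMμ hM0
  have hFν := hasFPowerSeriesOnBall_integral_inv_one_sub_mul huν hMν hM0
  have heq := (hFμ.analyticAt.frequently_eq_iff_eventually_eq hFν.analyticAt).1 h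
  have hseries := hFμ.hasFPowerSeriesAt.eq_formalMultilinearSeries
    (hFν.hasFPowerSeriesAt.congr (heq.mono fun _ ht => ht.symm))
  exact congrFun (FormalMultilinearSeries.ofScalars_series_injective ℝ ℝ hseries) n

end ResolventSeries

lemma MeasureTheory.Measure.map_injective_of_leftInverse {α β : Type*} [MeasurableSpace α]
    [MeasurableSpace β] {f : α → β} {g : β → α} (hf : Measurable f) (hg : Measurable g)
    (h : Function.LeftInverse g f) : Function.Injective (Measure.map f : Measure α → Measure β) :=
  fun μ ν hμν => by
    simpa [Measure.map_map hg hf, h.comp_eq_id] using congrArg (Measure.map g) hμν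

namespace Real

variable {q : ℝ}

lemma rpow_neg_mapsTo_Icc (hq0 : 0 < q) (hq1 : q ≤ 1) (a b : ℝ) :
    MapsTo (fun s => q ^ (-s)) (Icc a b) (Icc (q ^ (-a)) (q ^ (-b))) := fun _ hs =>
  ⟨rpow_le_rpow_of_exponent_ge hq0 hq1 (neg_le_neg hs.1),
    rpow_le_rpow_of_exponent_ge hq0 hq1 (neg_le_neg hs.2)⟩

lemma exists_gt_rpow_eq (hq0 : 0 < q) (hq1 : q < 1) {b t : ℝ} (ht : t ∈ Ioo 0 (q ^ b)) :
    ∃ x, b < x ∧ q ^ x = t :=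
  ⟨logb q t, (lt_logb_iff_rpow_lt_of_base_lt_one hq0 hq1 ht.1).2 ht.2, rpow_logb hq0 hq1.ne ht.1⟩

end Real

theorem stmt10_general (a b : ℝ) (q : ℝ) (hq : q ∈ Set.Ioo (0 : ℝ) 1)
    (μ ν : Measure ℝ) [IsProbabilityMeasure μ] [IsProbabilityMeasure ν]
    (hμ : μ (Set.Icc a b)ᶜ = 0) (hν : ν (Set.Icc a b)ᶜ = 0)
    (hR : ∀ x : ℝ, b < x →
      (∫ s, (1 - q ^ (x - s))⁻¹ ∂μ) = ∫ s, (1 - q ^ (x - s))⁻¹ ∂ν) :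
    μ = ν := by
  obtain ⟨hq0, hq1⟩ := hq
  set u : ℝ → ℝ := fun s => q ^ (-s)
  have hu : Continuous u := continuous_const.rpow continuous_neg fun _ => Or.inl hq0.ne'
  have hu_Icc := Real.rpow_neg_mapsTo_Icc hq0 hq1.le a b
  have hae : ∀ ρ : Measure ℝ, ρ (Icc a b)ᶜ = 0 → ∀ᵐ s ∂ρ, s ∈ Icc a b := fun _ => mem_ae_iff.2
  have hbound : ∀ ρ : Measure ℝ, ρ (Icc a b)ᶜ = 0 → ∀ᵐ s ∂ρ, |u s| ≤ q ^ (-b) := fun ρ hρ =>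
    (hae ρ hρ).mono fun s hs => by
      rw [abs_of_pos (Real.rpow_pos_of_pos hq0 _)]; exact (hu_Icc hs).2
  have hsupp : ∀ ρ : Measure ℝ, ρ (Icc a b)ᶜ = 0 →
      ∀ᵐ y ∂ρ.map u, y ∈ Icc (q ^ (-a)) (q ^ (-b)) := fun ρ hρ =>
    (ae_map_iff hu.aemeasurable measurableSet_Icc).2 ((hae ρ hρ).mono fun _ hs => hu_Icc hs)
  have hRt : ∀ᶠ t in 𝓝[>] 0, ∫ s, (1 - t * u s)⁻¹ ∂μ = ∫ s, (1 - t * u s)⁻¹ ∂ν := by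
    filter_upwards [Ioo_mem_nhdsGT (Real.rpow_pos_of_pos hq0 b)] with t ht
    obtain ⟨x, hbx, rfl⟩ := Real.exists_gt_rpow_eq hq0 hq1 ht
    simpa only [u, ← Real.rpow_add hq0, ← sub_eq_add_neg] using hR x hbx
  have hmoments := integral_pow_eq_of_frequently_integral_inv_one_sub_mul_eq
    hu.aestronglyMeasurable hu.aestronglyMeasurable (hbound μ hμ) (hbound ν hν)
    (Real.rpow_pos_of_pos hq0 _) (hRt.frequently.filter_mono (nhdsWithin_mono 0 fun _ hx => hx.ne'))
  have hmap : μ.map u = ν.map u := Measure.ext_of_forall_integral_pow_eq (hsupp μ hμ) (hsupp ν hν)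
    fun n => by
      rw [integral_map hu.aemeasurable (by fun_prop), integral_map hu.aemeasurable (by fun_prop)]
      exact hmoments n
  refine Measure.map_injective_of_leftInverse hu.measurable (g := fun y => -Real.logb q y)
    (by unfold Real.logb; fun_prop) (fun s => ?_) hmap
  simp [u, Real.logb_rpow hq0 hq1.ne]

/-- Let `a < b` and `q ∈ (0,1)`. If `μ` and `ν` are Borel probability measures on `ℝ`
supported in `[a,b]` with `∫ (1 − q^{x−s})⁻¹ dμ(s) = ∫ (1 − q^{x−s})⁻¹ dν(s)` for every
real `x > b`, then `μ = ν`: the q-deformed R-function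
`R_μ(x;q) = (1−q)·∫ (1 − q^{x−s})⁻¹ dμ(s)`, considered for `x > b`, determines `μ`. -/
theorem stmt10 (a b : ℝ) (hab : a < b) (q : ℝ) (hq : q ∈ Set.Ioo (0 : ℝ) 1)
    (μ ν : Measure ℝ) [IsProbabilityMeasure μ] [IsProbabilityMeasure ν]
    (hμ : μ (Set.Icc a b)ᶜ = 0) (hν : ν (Set.Icc a b)ᶜ = 0)
    (hR : ∀ x : ℝ, b < x →
      (∫ s, (1 - q ^ (x - s))⁻¹ ∂μ) = ∫ s, (1 - q ^ (x - s))⁻¹ ∂ν) :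
    μ = ν :=
  stmt10_general a b q hq μ ν hμ hν hR
end

section
/- Let a < 0 < b be reals and q ∈ (0,1). Say that a Borel probability measure μ supported in [a,b] and a finite signed Borel measure τ supported in [a,b] with τ(ℝ) = 1 are q-Markov–Krein related if ∫ (1 − q^{x−s})^{−1} dμ(s) = exp( ∫ ln((1 − q^{x−s})^{−1}) dτ(s) ) for every real x > b. Then: (1) if (μ,τ) and (μ,τ') are both q-Markov–Krein related, then τ = τ'; (2) if (μ,τ) and (μ',τ) are both q-Markov–Krein related, then μ = μ'. That is, in the q-deformation of the Markov–Krein correspondence the probability measure and the Rayleigh measure determine each other uniquely. -/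
open MeasureTheory

/-- The integral of a real function against a finite signed Borel measure, defined via the
Jordan decomposition `τ = τ⁺ − τ⁻`. -/
noncomputable def MeasureTheory.SignedMeasure.intg
    (τ : MeasureTheory.SignedMeasure ℝ) (f : ℝ → ℝ) : ℝ :=
  (∫ s, f s ∂τ.toJordanDecomposition.posPart) - ∫ s, f s ∂τ.toJordanDecomposition.negPart

/-- The q-Markov–Krein relation between a probability measure `μ` and a signed (Rayleigh)
measure `τ`: `∫ (1 − q^{x−s})⁻¹ dμ(s) = exp(∫ ln((1 − q^{x−s})⁻¹) dτ(s))` for all `x > b`. -/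
def qMarkovKrein (b q : ℝ) (μ : Measure ℝ) (τ : MeasureTheory.SignedMeasure ℝ) : Prop :=
  ∀ x : ℝ, b < x →
    (∫ s, (1 - q ^ (x - s))⁻¹ ∂μ)
      = Real.exp (τ.intg fun s => Real.log (1 - q ^ (x - s))⁻¹)

/-! Writing `t = q ^ x` gives `q ^ (x - s) = t * u s` with `u s = q ^ (-s)`, and for `|t| < q ^ b`
both sides of the q-Markov–Krein relation expand into power series in `t`: the left side is
`∑ₙ (∫ uⁿ dμ) tⁿ` and the logarithm of the right side is `∑ₙ (∫ uⁿ dτ / n) tⁿ`. Agreement for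
`t ∈ (0, q ^ b)` forces equal coefficients, so either measure determines all `u`-moments of the
other (for `τ`, the zeroth one is `τ(ℝ) = 1`). Since `u` is injective and everything lives on the
compact interval `[a, b]`, Weierstrass approximation shows that these moments determine a finite
measure; for `τ` this is applied to the positive measures `τ⁺ + τ'⁻` and `τ'⁺ + τ⁻`. -/

open Set Topology Polynomial

-- The `n = 0` term vanishes because `(0 : ℝ)⁻¹ = 0`.
theorem Real.hasSum_inv_mul_pow_log_one_sub_inv {x : ℝ} (hx : |x| < 1) :
    HasSum (fun n : ℕ => (n : ℝ)⁻¹ * x ^ n) (Real.log (1 - x)⁻¹) := by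
  rw [← hasSum_nat_add_iff' 1, Real.log_inv]
  simpa [div_eq_inv_mul] using Real.hasSum_pow_div_log_of_abs_lt_one hx

theorem abs_inv_natCast_le_one (n : ℕ) : |(n : ℝ)⁻¹| ≤ 1 := by
  rcases n with _ | n
  · simp
  · rw [abs_inv, Nat.abs_cast]
    exact inv_le_one_of_one_le₀ (by simp)

theorem hasSum_integral_comp_mul {α : Type*} [MeasurableSpace α] {ν : Measure α}
    [IsFiniteMeasure ν] {u : α → ℝ} {M t : ℝ} {c : ℕ → ℝ} {g : ℝ → ℝ}
    (hu : AEStronglyMeasurable u ν) (hM : ∀ᵐ s ∂ν, |u s| ≤ M) (hM0 : 0 ≤ M)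
    (ht : |t| * M < 1) (hc : ∀ n, |c n| ≤ 1)
    (hg : ∀ x, |x| < 1 → HasSum (fun n => c n * x ^ n) (g x)) :
    HasSum (fun n => c n * (∫ s, u s ^ n ∂ν) * t ^ n) (∫ s, g (t * u s) ∂ν) := by
  have hbound : ∀ n, ∀ᵐ s ∂ν, ‖c n * (t * u s) ^ n‖ ≤ (|t| * M) ^ n := fun n => by
    filter_upwards [hM] with s hs
    rw [Real.norm_eq_abs, abs_mul, abs_pow, abs_mul]
    exact (mul_le_of_le_one_left (by positivity) (hc n)).trans (by gcongr)
  have hsum := hasSum_integral_of_dominated_convergence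
    (F := fun n s => c n * (t * u s) ^ n) (f := fun s => g (t * u s)) (fun n _ => (|t| * M) ^ n)
    (fun n => aestronglyMeasurable_const.mul ((aestronglyMeasurable_const.mul hu).pow n)) hbound
    (.of_forall fun _ => summable_geometric_of_lt_one (by positivity) ht) (integrable_const _)
    (by
      filter_upwards [hM] with s hs
      refine hg _ ?_
      rw [abs_mul]
      exact (mul_le_mul_of_nonneg_left hs (abs_nonneg t)).trans_lt ht)
  have hterm : ∀ n, ∫ s, c n * (t * u s) ^ n ∂ν = c n * (∫ s, u s ^ n ∂ν) * t ^ n := fun n => by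
    simp only [mul_pow, ← mul_assoc, mul_right_comm _ _ (u _ ^ n), integral_mul_const,
      integral_const_mul]
  simpa only [hterm] using hsum

theorem FormalMultilinearSeries.hasFPowerSeriesAt_ofScalars_of_hasSum {c : ℕ → ℝ} {f : ℝ → ℝ}
    {r : ℝ} (hr : 0 < r) (hf : ∀ t, |t| < r → HasSum (fun n => c n * t ^ n) (f t)) :
    HasFPowerSeriesAt f (ofScalars ℝ c) 0 := by
  obtain ⟨ρ, hρ0, hρr⟩ := exists_between hr
  lift ρ to NNReal using hρ0.le
  refine ⟨ρ, ?_, by exact_mod_cast hρ0, fun {y} hy => ?_⟩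
  · refine (ofScalars ℝ c).le_radius_of_summable ?_
    simpa [ofScalars_norm, abs_mul] using (hf ρ (by simpa using hρr)).summable.abs
  · rw [Metric.mem_eball, edist_zero_right, enorm_eq_nnnorm, ENNReal.coe_lt_coe,
      ← NNReal.coe_lt_coe, coe_nnnorm, Real.norm_eq_abs] at hy
    simpa [ofScalars_apply_eq, mul_comm] using hf y (hy.trans hρr)

theorem eq_of_hasSum_pow_eqOn_Ioo {c c' : ℕ → ℝ} {f f' : ℝ → ℝ} {r : ℝ} (hr : 0 < r)
    (hf : ∀ t, |t| < r → HasSum (fun n => c n * t ^ n) (f t))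
    (hf' : ∀ t, |t| < r → HasSum (fun n => c' n * t ^ n) (f' t))
    (h : EqOn f f' (Ioo 0 r)) : c = c' := by
  have hp := FormalMultilinearSeries.hasFPowerSeriesAt_ofScalars_of_hasSum hr hf
  have hp' := FormalMultilinearSeries.hasFPowerSeriesAt_ofScalars_of_hasSum hr hf'
  have hfreq : ∃ᶠ t in 𝓝[≠] (0 : ℝ), f t = f' t :=
    have hev : ∀ᶠ t in 𝓝[>] (0 : ℝ), f t = f' t :=
      Filter.mem_of_superset (Ioo_mem_nhdsGT hr) fun _ ht => h ht
    hev.frequently.filter_mono (nhdsGT_le_nhdsNE 0)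
  exact FormalMultilinearSeries.ofScalars_series_injective ℝ ℝ <|
    hp.eq_formalMultilinearSeries_of_eventually hp'
      ((hp.analyticAt.frequently_eq_iff_eventually_eq hp'.analyticAt).mp hfreq)

theorem Continuous.integrable_of_ae_mem_compact {X E : Type*} [TopologicalSpace X] [T2Space X]
    [MeasurableSpace X] [OpensMeasurableSpace X] [NormedAddCommGroup E] {ν : Measure X}
    [IsFiniteMeasure ν] {g : X → E} {K : Set X} (hg : Continuous g) (hK : IsCompact K)
    (hν : ∀ᵐ x ∂ν, x ∈ K) : Integrable g ν := by
  rw [← Measure.restrict_eq_self_of_ae_mem hν]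
  exact hg.continuousOn.integrableOn_compact hK

theorem integral_polynomial_eval_eq_sum {ν : Measure ℝ} [IsFiniteMeasure ν] {K : Set ℝ}
    (hK : IsCompact K) (hν : ∀ᵐ x ∂ν, x ∈ K) (p : ℝ[X]) :
    ∫ x, p.eval x ∂ν = ∑ i ∈ Finset.range (p.natDegree + 1), p.coeff i * ∫ x, x ^ i ∂ν := by
  simp only [eval_eq_sum_range]
  rw [integral_finsetSum _ fun i _ =>
    ((continuous_pow i).integrable_of_ae_mem_compact hK hν).const_mul _]
  simp only [integral_const_mul]

theorem MeasureTheory.Measure.ext_of_integral_pow_eq {ν ν' : Measure ℝ} [IsFiniteMeasure ν]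
    [IsFiniteMeasure ν'] {c d : ℝ} (hν : ∀ᵐ x ∂ν, x ∈ Icc c d) (hν' : ∀ᵐ x ∂ν', x ∈ Icc c d)
    (h : ∀ n : ℕ, ∫ x, x ^ n ∂ν = ∫ x, x ^ n ∂ν') : ν = ν' := by
  refine ext_of_forall_integral_eq_of_IsFiniteMeasure fun f => eq_of_forall_dist_le fun ε hε => ?_
  set C := ν.real univ + ν'.real univ
  have hC : 0 ≤ C := by positivity
  obtain ⟨p, hp⟩ := exists_polynomial_near_of_continuousOn c d f f.continuous.continuousOn
    (ε / (C + 1)) (by positivity)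
  have happrox : ∀ (ρ : Measure ℝ) [IsFiniteMeasure ρ], (∀ᵐ x ∂ρ, x ∈ Icc c d) →
      dist (∫ x, f x ∂ρ) (∫ x, p.eval x ∂ρ) ≤ ε / (C + 1) * ρ.real univ := by
    intro ρ _ hρ
    rw [dist_eq_norm, ← integral_sub (f.continuous.integrable_of_ae_mem_compact isCompact_Icc hρ)
      (p.continuous.integrable_of_ae_mem_compact isCompact_Icc hρ)]
    refine norm_integral_le_of_norm_le_const ?_
    filter_upwards [hρ] with x hx
    rw [Real.norm_eq_abs, abs_sub_comm]
    exact (hp x hx).le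
  have hpoly : ∫ x, p.eval x ∂ν = ∫ x, p.eval x ∂ν' := by
    simp only [integral_polynomial_eval_eq_sum isCompact_Icc hν,
      integral_polynomial_eval_eq_sum isCompact_Icc hν', h]
  calc dist (∫ x, f x ∂ν) (∫ x, f x ∂ν')
      ≤ dist (∫ x, f x ∂ν) (∫ x, p.eval x ∂ν) + dist (∫ x, f x ∂ν') (∫ x, p.eval x ∂ν') := by
        rw [dist_comm (∫ x, f x ∂ν'), ← hpoly]
        exact dist_triangle _ _ _
    _ ≤ ε / (C + 1) * C := by
        rw [mul_add]
        exact add_le_add (happrox ν hν) (happrox ν' hν')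
    _ ≤ ε := by
        rw [div_mul_eq_mul_div, div_le_iff₀ (by positivity)]
        nlinarith

theorem MeasureTheory.Measure.ext_of_integral_comp_pow_eq {α : Type*} [MeasurableSpace α]
    {ν ν' : Measure α} [IsFiniteMeasure ν] [IsFiniteMeasure ν'] {u : α → ℝ}
    (hu : MeasurableEmbedding u) {c d : ℝ}
    (hν : ∀ᵐ s ∂ν, u s ∈ Icc c d) (hν' : ∀ᵐ s ∂ν', u s ∈ Icc c d)
    (h : ∀ n : ℕ, ∫ s, u s ^ n ∂ν = ∫ s, u s ^ n ∂ν') : ν = ν' := by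
  refine hu.map_injective (Measure.ext_of_integral_pow_eq (c := c) (d := d) ?_ ?_ fun n => ?_)
  · exact (ae_map_iff hu.measurable.aemeasurable measurableSet_Icc).mpr hν
  · exact (ae_map_iff hu.measurable.aemeasurable measurableSet_Icc).mpr hν'
  · rw [hu.integral_map, hu.integral_map]
    exact h n

namespace MeasureTheory.SignedMeasure

theorem intg_one (σ : SignedMeasure ℝ) : σ.intg (fun _ => 1) = σ univ := by
  conv_rhs => rw [← σ.toSignedMeasure_toJordanDecomposition]
  simp [intg, JordanDecomposition.toSignedMeasure,
    Measure.toSignedMeasure_sub_apply MeasurableSet.univ]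

theorem ae_totalVariation_iff {α : Type*} [MeasurableSpace α] {σ : SignedMeasure α}
    {p : α → Prop} :
    (∀ᵐ s ∂σ.totalVariation, p s) ↔
      (∀ᵐ s ∂σ.toJordanDecomposition.posPart, p s) ∧ ∀ᵐ s ∂σ.toJordanDecomposition.negPart, p s :=
  ae_add_measure_iff

theorem hasSum_intg_comp_mul {σ : SignedMeasure ℝ} {u : ℝ → ℝ} {M t : ℝ} {c : ℕ → ℝ}
    {g : ℝ → ℝ} (hu : Measurable u) (hM : ∀ᵐ s ∂σ.totalVariation, |u s| ≤ M) (hM0 : 0 ≤ M)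
    (ht : |t| * M < 1) (hc : ∀ n, |c n| ≤ 1)
    (hg : ∀ x, |x| < 1 → HasSum (fun n => c n * x ^ n) (g x)) :
    HasSum (fun n => c n * σ.intg (fun s => u s ^ n) * t ^ n) (σ.intg fun s => g (t * u s)) := by
  obtain ⟨hMpos, hMneg⟩ := ae_totalVariation_iff.mp hM
  simpa only [intg, mul_sub, sub_mul] using
    (hasSum_integral_comp_mul hu.aestronglyMeasurable hMpos hM0 ht hc hg).sub
      (hasSum_integral_comp_mul hu.aestronglyMeasurable hMneg hM0 ht hc hg)

theorem ext_of_intg_comp_pow_eq {σ σ' : SignedMeasure ℝ} {u : ℝ → ℝ}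
    (hu : MeasurableEmbedding u) {c d : ℝ} (hσ : ∀ᵐ s ∂σ.totalVariation, u s ∈ Icc c d)
    (hσ' : ∀ᵐ s ∂σ'.totalVariation, u s ∈ Icc c d)
    (h : ∀ n : ℕ, σ.intg (fun s => u s ^ n) = σ'.intg (fun s => u s ^ n)) : σ = σ' := by
  obtain ⟨hσp, hσn⟩ := ae_totalVariation_iff.mp hσ
  obtain ⟨hσ'p, hσ'n⟩ := ae_totalVariation_iff.mp hσ'
  set P := σ.toJordanDecomposition.posPart
  set N := σ.toJordanDecomposition.negPart
  set P' := σ'.toJordanDecomposition.posPart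
  set N' := σ'.toJordanDecomposition.negPart
  have hint : ∀ (ρ : Measure ℝ) [IsFiniteMeasure ρ], (∀ᵐ s ∂ρ, u s ∈ Icc c d) →
      ∀ n : ℕ, Integrable (fun s => u s ^ n) ρ := fun ρ _ hρ n =>
    hu.integrable_map_iff.mp <| (continuous_pow n).integrable_of_ae_mem_compact isCompact_Icc <|
      (ae_map_iff hu.measurable.aemeasurable measurableSet_Icc).mpr hρ
  have hsum : P + N' = P' + N := by
    refine Measure.ext_of_integral_comp_pow_eq hu (ae_add_measure_iff.mpr ⟨hσp, hσ'n⟩)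
      (ae_add_measure_iff.mpr ⟨hσ'p, hσn⟩) fun n => ?_
    rw [integral_add_measure (hint P hσp n) (hint N' hσ'n n),
      integral_add_measure (hint P' hσ'p n) (hint N hσn n)]
    have hn := h n
    simp only [intg] at hn
    linarith
  calc σ = P.toSignedMeasure - N.toSignedMeasure := σ.toSignedMeasure_toJordanDecomposition.symm
    _ = P'.toSignedMeasure - N'.toSignedMeasure := by
      rw [sub_eq_sub_iff_add_eq_add, ← Measure.toSignedMeasure_add, ← Measure.toSignedMeasure_add]
      simp only [hsum]
    _ = σ' := σ'.toSignedMeasure_toJordanDecomposition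

end MeasureTheory.SignedMeasure

section RpowNeg

variable {q : ℝ}

theorem continuous_rpow_neg (hq : 0 < q) : Continuous fun s : ℝ => q ^ (-s) :=
  continuous_const.rpow continuous_neg fun _ => .inl hq.ne'

theorem rpow_neg_mem_Icc_of_mem_Icc (hq : q ∈ Ioo 0 1) {a b s : ℝ} (hs : s ∈ Icc a b) :
    q ^ (-s) ∈ Icc (q ^ (-a)) (q ^ (-b)) :=
  ⟨Real.rpow_le_rpow_of_exponent_ge hq.1 hq.2.le (neg_le_neg hs.1),
    Real.rpow_le_rpow_of_exponent_ge hq.1 hq.2.le (neg_le_neg hs.2)⟩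

theorem ae_rpow_neg_mem_Icc (hq : q ∈ Ioo 0 1) {ν : Measure ℝ} {a b : ℝ}
    (hν : ν (Icc a b)ᶜ = 0) : ∀ᵐ s ∂ν, q ^ (-s) ∈ Icc (q ^ (-a)) (q ^ (-b)) :=
  (measure_eq_zero_iff_ae_notMem.mp hν).mono fun _ hs =>
    rpow_neg_mem_Icc_of_mem_Icc hq (not_not.mp hs)

theorem measurableEmbedding_rpow_neg (hq : q ∈ Ioo 0 1) :
    MeasurableEmbedding fun s : ℝ => q ^ (-s) :=
  (continuous_rpow_neg hq.1).measurableEmbedding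
    fun _ _ h => neg_injective <| (Real.rpow_right_inj hq.1 hq.2.ne).mp h

theorem exists_lt_rpow_eq (hq : q ∈ Ioo 0 1) {b t : ℝ} (ht : t ∈ Ioo 0 (q ^ b)) :
    ∃ x, b < x ∧ q ^ x = t :=
  ⟨Real.logb q t, (Real.lt_logb_iff_rpow_lt_of_base_lt_one hq.1 hq.2 ht.1).mpr ht.2,
    Real.rpow_logb hq.1 hq.2.ne ht.1⟩

theorem abs_mul_rpow_neg_lt_one (hq : q ∈ Ioo 0 1) {b t : ℝ} (ht : |t| < q ^ b) :
    |t| * q ^ (-b) < 1 := by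
  rwa [Real.rpow_neg hq.1.le, ← div_eq_mul_inv, div_lt_one (Real.rpow_pos_of_pos hq.1 b)]

theorem ae_abs_rpow_neg_le (hq : q ∈ Ioo 0 1) {ν : Measure ℝ} {a b : ℝ}
    (hν : ν (Icc a b)ᶜ = 0) : ∀ᵐ s ∂ν, |q ^ (-s)| ≤ q ^ (-b) :=
  (ae_rpow_neg_mem_Icc hq hν).mono fun s hs => by
    rw [abs_of_pos (Real.rpow_pos_of_pos hq.1 _)]
    exact hs.2

theorem hasSum_integral_inv_one_sub_mul_rpow_neg (hq : q ∈ Ioo 0 1) {ν : Measure ℝ}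
    [IsFiniteMeasure ν] {a b : ℝ} (hν : ν (Icc a b)ᶜ = 0) {t : ℝ} (ht : |t| < q ^ b) :
    HasSum (fun n => (∫ s, (q ^ (-s)) ^ n ∂ν) * t ^ n) (∫ s, (1 - t * q ^ (-s))⁻¹ ∂ν) := by
  simpa only [one_mul] using hasSum_integral_comp_mul (c := fun _ => 1)
    (continuous_rpow_neg hq.1).aestronglyMeasurable
    (ae_abs_rpow_neg_le hq hν) (Real.rpow_pos_of_pos hq.1 _).le (abs_mul_rpow_neg_lt_one hq ht)
    (fun _ => abs_one.le) fun x hx => by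
      simpa only [one_mul] using hasSum_geometric_of_norm_lt_one (Real.norm_eq_abs x ▸ hx)

theorem MeasureTheory.SignedMeasure.hasSum_intg_log_inv_one_sub_mul_rpow_neg (hq : q ∈ Ioo 0 1)
    {σ : SignedMeasure ℝ} {a b : ℝ} (hσ : σ.totalVariation (Icc a b)ᶜ = 0) {t : ℝ}
    (ht : |t| < q ^ b) :
    HasSum (fun n : ℕ => (n : ℝ)⁻¹ * σ.intg (fun s => (q ^ (-s)) ^ n) * t ^ n)
      (σ.intg fun s => Real.log (1 - t * q ^ (-s))⁻¹) :=
  SignedMeasure.hasSum_intg_comp_mul (continuous_rpow_neg hq.1).measurable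
    (ae_abs_rpow_neg_le hq hσ) (Real.rpow_pos_of_pos hq.1 _).le (abs_mul_rpow_neg_lt_one hq ht)
    abs_inv_natCast_le_one fun _ => Real.hasSum_inv_mul_pow_log_one_sub_inv

theorem qMarkovKrein.eqOn_Ioo {b : ℝ} {μ : Measure ℝ} {τ : SignedMeasure ℝ}
    (h : qMarkovKrein b q μ τ) (hq : q ∈ Ioo 0 1) :
    EqOn (fun t => ∫ s, (1 - t * q ^ (-s))⁻¹ ∂μ)
      (fun t => Real.exp (τ.intg fun s => Real.log (1 - t * q ^ (-s))⁻¹)) (Ioo 0 (q ^ b)) := by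
  intro t ht
  obtain ⟨x, hx, rfl⟩ := exists_lt_rpow_eq hq ht
  simp only [← Real.rpow_add hq.1, ← sub_eq_add_neg]
  exact h x hx

end RpowNeg

theorem stmt12_general (a b : ℝ) (q : ℝ) (hq : q ∈ Set.Ioo (0 : ℝ) 1)
    (μ μ' : Measure ℝ) [IsProbabilityMeasure μ] [IsProbabilityMeasure μ']
    (hμ : μ (Set.Icc a b)ᶜ = 0) (hμ' : μ' (Set.Icc a b)ᶜ = 0)
    (τ τ' : MeasureTheory.SignedMeasure ℝ)
    (hτ : τ.totalVariation (Set.Icc a b)ᶜ = 0)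
    (hτ' : τ'.totalVariation (Set.Icc a b)ᶜ = 0)
    (hτ1 : τ Set.univ = 1) (hτ'1 : τ' Set.univ = 1) :
    (qMarkovKrein b q μ τ → qMarkovKrein b q μ τ' → τ = τ') ∧
    (qMarkovKrein b q μ τ → qMarkovKrein b q μ' τ → μ = μ') := by
  have hr : 0 < q ^ b := Real.rpow_pos_of_pos hq.1 b
  constructor
  · intro h h'
    have hcoeff := eq_of_hasSum_pow_eqOn_Ioo hr
      (fun _ => SignedMeasure.hasSum_intg_log_inv_one_sub_mul_rpow_neg hq hτ)
      (fun _ => SignedMeasure.hasSum_intg_log_inv_one_sub_mul_rpow_neg hq hτ')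
      fun t ht => Real.exp_injective ((h.eqOn_Ioo hq ht).symm.trans (h'.eqOn_Ioo hq ht))
    refine SignedMeasure.ext_of_intg_comp_pow_eq (measurableEmbedding_rpow_neg hq)
      (ae_rpow_neg_mem_Icc hq hτ) (ae_rpow_neg_mem_Icc hq hτ') fun n => ?_
    rcases n.eq_zero_or_pos with rfl | hn
    · simp only [pow_zero, SignedMeasure.intg_one, hτ1, hτ'1]
    · exact mul_left_cancel₀ (by positivity) (congrFun hcoeff n)
  · intro h h'
    have hcoeff := eq_of_hasSum_pow_eqOn_Ioo hr
      (fun _ => hasSum_integral_inv_one_sub_mul_rpow_neg hq hμ)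
      (fun _ => hasSum_integral_inv_one_sub_mul_rpow_neg hq hμ')
      fun t ht => (h.eqOn_Ioo hq ht).trans (h'.eqOn_Ioo hq ht).symm
    exact Measure.ext_of_integral_comp_pow_eq (measurableEmbedding_rpow_neg hq)
      (ae_rpow_neg_mem_Icc hq hμ) (ae_rpow_neg_mem_Icc hq hμ') (congrFun hcoeff)

/-- Let `a < 0 < b` and `q ∈ (0,1)`. In the q-deformed Markov–Krein correspondence the
probability measure and the Rayleigh measure determine each other uniquely:
(1) if `(μ,τ)` and `(μ,τ')` are q-Markov–Krein related then `τ = τ'`;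
(2) if `(μ,τ)` and `(μ',τ)` are q-Markov–Krein related then `μ = μ'`. -/
theorem stmt12 (a b : ℝ) (ha : a < 0) (hb : 0 < b) (q : ℝ) (hq : q ∈ Set.Ioo (0 : ℝ) 1)
    (μ μ' : Measure ℝ) [IsProbabilityMeasure μ] [IsProbabilityMeasure μ']
    (hμ : μ (Set.Icc a b)ᶜ = 0) (hμ' : μ' (Set.Icc a b)ᶜ = 0)
    (τ τ' : MeasureTheory.SignedMeasure ℝ)
    (hτ : τ.totalVariation (Set.Icc a b)ᶜ = 0)
    (hτ' : τ'.totalVariation (Set.Icc a b)ᶜ = 0)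
    (hτ1 : τ Set.univ = 1) (hτ'1 : τ' Set.univ = 1) :
    (qMarkovKrein b q μ τ → qMarkovKrein b q μ τ' → τ = τ') ∧
    (qMarkovKrein b q μ τ → qMarkovKrein b q μ' τ → μ = μ') :=
  stmt12_general a b q hq μ μ' hμ hμ' τ τ' hτ hτ' hτ1 hτ'1
end

section
/- Let D ⊆ ℝ × (0,∞) be an open set and let r : D → ℝ be differentiable. Suppose that for all (u,ϱ) ∈ D the implicit equation r(u,ϱ)·(1 − e^{−ϱ(u − r(u,ϱ))}) = ϱ holds, and that r(u,ϱ)²·e^{−ϱ(u − r(u,ϱ))} ≠ 1 on D. Then r satisfies the quasi-linear partial differential equation 2r·∂r/∂u − u·∂r/∂u + ϱ·∂r/∂ϱ = r on D. -/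
/-!
Implicit differentiation. Write `Φ((u, ϱ), s) = s (1 - e^{-ϱ (u - s)}) - ϱ` (`qShapeRelation`),
so that `Φ((u, ϱ), r(u, ϱ)) = 0` on the open set `D`. Differentiating along the graph of `r` gives
`Φ_s r_u + Φ_u = 0` and `Φ_s r_ϱ + Φ_ϱ = 0`, and a direct computation shows
`Φ_s (2r r_u - u r_u + ϱ r_ϱ - r) = -(r (1 - e^{-ϱ(u-r)}) - ϱ) = 0`.
Finally `r Φ_s = ϱ (1 - r² e^{-ϱ(u-r)})` by the relation itself, and this is nonzero.
-/

open Filter Topology Real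

theorem HasFDerivAt.apply_fderiv_graph_eq_zero {𝕜 E F G : Type*} [NontriviallyNormedField 𝕜]
    [NormedAddCommGroup E] [NormedSpace 𝕜 E] [NormedAddCommGroup F] [NormedSpace 𝕜 F]
    [NormedAddCommGroup G] [NormedSpace 𝕜 G] {Φ : E × F → G} {Φ' : E × F →L[𝕜] G}
    {r : E → F} {p : E} (hΦ : HasFDerivAt Φ Φ' (p, r p)) (hr : DifferentiableAt 𝕜 r p)
    (hzero : ∀ᶠ q in 𝓝 p, Φ (q, r q) = 0) (v : E) : Φ' (v, fderiv 𝕜 r p v) = 0 := by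
  have hcomp := hΦ.comp p ((hasFDerivAt_id p).prodMk hr.hasFDerivAt)
  have hconst : HasFDerivAt (fun q => Φ (q, r q)) (0 : E →L[𝕜] G) p :=
    (hasFDerivAt_const 0 p).congr_of_eventuallyEq hzero
  simpa using congrArg (· v) (hcomp.unique hconst)

noncomputable def qShapeRelation (w : (ℝ × ℝ) × ℝ) : ℝ :=
  w.2 * (1 - exp (-w.1.2 * (w.1.1 - w.2))) - w.1.2

open ContinuousLinearMap in
theorem hasFDerivAt_qShapeRelation (u ϱ s : ℝ) :
    HasFDerivAt qShapeRelation
      ((s * ϱ * exp (-ϱ * (u - s))) • (fst ℝ ℝ ℝ).comp (fst ℝ (ℝ × ℝ) ℝ)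
        + (s * (u - s) * exp (-ϱ * (u - s)) - 1) • (snd ℝ ℝ ℝ).comp (fst ℝ (ℝ × ℝ) ℝ)
        + (1 - exp (-ϱ * (u - s)) - s * ϱ * exp (-ϱ * (u - s))) • snd ℝ (ℝ × ℝ) ℝ)
      ((u, ϱ), s) := by
  have hu := (hasFDerivAt_fst (𝕜 := ℝ) (p := ((u, ϱ), s))).fst
  have hϱ := (hasFDerivAt_fst (𝕜 := ℝ) (p := ((u, ϱ), s))).snd
  have hs := hasFDerivAt_snd (𝕜 := ℝ) (p := ((u, ϱ), s))
  refine ((hs.mul ((hϱ.neg.mul (hu.sub hs)).exp.const_sub 1)).sub hϱ).congr_fderiv <|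
    ContinuousLinearMap.ext fun _ => ?_
  simp only [Pi.mul_apply, Pi.neg_apply, Pi.sub_apply, add_apply, sub_apply, smul_apply, neg_apply,
    comp_apply, coe_fst', coe_snd', smul_eq_mul]
  ring

theorem qBurgers_of_implicit_partials {u ϱ s E a b : ℝ} (hϱ : ϱ ≠ 0) (hnd : s ^ 2 * E ≠ 1)
    (hrel : s * (1 - E) = ϱ) (ha : s * ϱ * E + (1 - E - s * ϱ * E) * a = 0)
    (hb : s * (u - s) * E - 1 + (1 - E - s * ϱ * E) * b = 0) :
    2 * s * a - u * a + ϱ * b = s := by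
  have hGs : 1 - E - s * ϱ * E ≠ 0 := by
    have : s * (1 - E - s * ϱ * E) = ϱ * (1 - s ^ 2 * E) := by linear_combination hrel
    exact right_ne_zero_of_mul (this ▸ mul_ne_zero hϱ (sub_ne_zero.mpr hnd.symm))
  refine mul_left_cancel₀ hGs ?_
  linear_combination (2 * s - u) * ha + ϱ * hb - hrel

/-- Let `D ⊆ ℝ × (0,∞)` be open and `r : D → ℝ` differentiable, satisfying the implicit
equation `r·(1 − e^{−ϱ(u − r)}) = ϱ` with `r²·e^{−ϱ(u − r)} ≠ 1` on `D`. Then `r` satisfies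
the quasi-linear PDE `2r·∂r/∂u − u·∂r/∂u + ϱ·∂r/∂ϱ = r` on `D`. Here a point of `D` is
`p = (u, ϱ)`, and `∂r/∂u`, `∂r/∂ϱ` are `fderiv ℝ r p (1,0)`, `fderiv ℝ r p (0,1)`. -/
theorem stmt14 (D : Set (ℝ × ℝ)) (hD : IsOpen D) (hDpos : ∀ p ∈ D, 0 < p.2)
    (r : ℝ × ℝ → ℝ) (hr : ∀ p ∈ D, DifferentiableAt ℝ r p)
    (heq : ∀ p ∈ D, r p * (1 - Real.exp (-p.2 * (p.1 - r p))) = p.2)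
    (hnd : ∀ p ∈ D, r p ^ 2 * Real.exp (-p.2 * (p.1 - r p)) ≠ 1) :
    ∀ p ∈ D,
      2 * r p * fderiv ℝ r p (1, 0) - p.1 * fderiv ℝ r p (1, 0)
        + p.2 * fderiv ℝ r p (0, 1) = r p := by
  intro p hp
  have hzero : ∀ᶠ q in 𝓝 p, qShapeRelation (q, r q) = 0 :=
    eventually_of_mem (hD.mem_nhds hp) fun q hq => sub_eq_zero_of_eq (heq q hq)
  have hΦ := hasFDerivAt_qShapeRelation p.1 p.2 (r p)
  have hu := hΦ.apply_fderiv_graph_eq_zero (hr p hp) hzero (1, 0)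
  have hϱ := hΦ.apply_fderiv_graph_eq_zero (hr p hp) hzero (0, 1)
  simp only [Prod.mk.eta, add_apply, smul_apply,
    ContinuousLinearMap.comp_apply, ContinuousLinearMap.coe_fst', ContinuousLinearMap.coe_snd',
    smul_eq_mul, mul_one, mul_zero, add_zero, zero_add] at hu hϱ
  exact qBurgers_of_implicit_partials (hDpos p hp).ne' (hnd p hp) (heq p hp) hu hϱ
end

section
/- For all fixed real numbers x and r, lim_{q → 1⁻} (1 − q^{x − r·ln(q^{−1})/(1−q)})/(1 − q) = x − r. Consequently, as q → 1 the equation r·(1 − q^{x − (ln q^{−1}/(1−q))·r}) = 1 − q characterizing the q-deformed limit shape reduces to the equation r·(x − r) = 1 characterizing the R-function of the Vershik–Kerov–Logan–Shepp limit shape Ω. -/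
/-!
Write `q ^ e = exp (log q * e)`. Since `log q⁻¹ / (1 - q) = log q / (q - 1)` is the slope `s q` of
`log` between `1` and `q`, the quantity is `(exp u - 1) / (q - 1)` with `u = log q * (x - r * s q)`.
As `q → 1`, `u → 0`, so `exp u - 1 ~ u`, and `u / (q - 1) = s q * (x - r * s q) → x - r`
because `s q → log' 1 = 1`.
-/

open Filter Topology Real

theorem Filter.Tendsto.exp_sub_one_div {α : Type*} {l : Filter α} {u v : α → ℝ} {c : ℝ}
    (hu : Tendsto u l (𝓝 0)) (huv : Tendsto (fun i => u i / v i) l (𝓝 c)) :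
    Tendsto (fun i => (Real.exp (u i) - 1) / v i) l (𝓝 c) := by
  have hslope : Tendsto (dslope Real.exp 0) (𝓝 0) (𝓝 1) := by
    simpa [dslope_same] using
      (continuousAt_dslope_same.2 (Real.differentiableAt_exp (x := 0))).tendsto
  have h := (hslope.comp hu).mul huv
  rw [one_mul] at h
  refine h.congr fun i => ?_
  have hexp := sub_smul_dslope Real.exp 0 (u i)
  rw [sub_zero, smul_eq_mul, Real.exp_zero] at hexp
  simp only [Function.comp_apply, ← hexp]
  ring

theorem Real.tendsto_slope_log_one : Tendsto (slope log 1) (𝓝[≠] 1) (𝓝 1) := by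
  simpa using (hasDerivAt_log one_ne_zero).tendsto_slope

theorem Real.rpow_sub_mul_log_inv_div_one_sub {q : ℝ} (hq : 0 < q) (x r : ℝ) :
    q ^ (x - r * log q⁻¹ / (1 - q)) = exp (log q * (x - r * slope log 1 q)) := by
  rw [rpow_def_of_pos hq, slope_def_field, log_one, sub_zero, log_inv, ← neg_sub q 1, div_neg]
  congr 1
  ring

/-- For all fixed reals `x` and `r`,
`lim_{q → 1⁻} (1 − q^{x − r·ln(q⁻¹)/(1−q)})/(1 − q) = x − r`
(the limit being taken over `q ∈ (0,1)` tending to `1`). Consequently, as `q → 1` the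
equation `r(1 − q^{x − (ln q⁻¹/(1−q))r}) = 1 − q` characterizing the q-deformed limit shape
reduces to `r(x − r) = 1`, the equation for the R-function of the limit shape `Ω`. -/
theorem stmt15 (x r : ℝ) :
    Filter.Tendsto
      (fun q : ℝ => (1 - q ^ (x - r * Real.log q⁻¹ / (1 - q))) / (1 - q))
      (nhdsWithin 1 (Set.Ioo (0 : ℝ) 1)) (nhds (x - r)) := by
  have hS : Tendsto (slope log 1) (𝓝[Set.Ioo 0 1] 1) (𝓝 1) :=
    tendsto_slope_log_one.mono_left <| nhdsWithin_mono 1 fun q hq => hq.2.ne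
  have hlog : Tendsto log (𝓝[Set.Ioo 0 1] 1) (𝓝 0) := by
    simpa using (continuousAt_log one_ne_zero).tendsto.mono_left nhdsWithin_le_nhds
  have hexponent : Tendsto (fun q => x - r * slope log 1 q) (𝓝[Set.Ioo 0 1] 1) (𝓝 (x - r)) := by
    simpa using tendsto_const_nhds.sub (hS.const_mul r)
  have hu : Tendsto (fun q => log q * (x - r * slope log 1 q)) (𝓝[Set.Ioo 0 1] 1) (𝓝 0) := by
    simpa using hlog.mul hexponent
  have huv : Tendsto (fun q => log q * (x - r * slope log 1 q) / (q - 1))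
      (𝓝[Set.Ioo 0 1] 1) (𝓝 (x - r)) := by
    refine (one_mul (x - r) ▸ hS.mul hexponent).congr fun q => ?_
    rw [slope_def_field, log_one, sub_zero, div_mul_eq_mul_div]
  refine (hu.exp_sub_one_div huv).congr' ?_
  filter_upwards [self_mem_nhdsWithin] with q hq
  rw [rpow_sub_mul_log_inv_div_one_sub hq.1, ← neg_sub q 1, div_neg, ← neg_div, neg_sub]
end
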